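/- If f : ℝ → ℝ is a discontinuous n-monomial and h₀, h₁ are nonzero reals with A₀ = f(h₀)/h₀^n ≠ A₁ = f(h₁)/h₁^n, then for every x and every y between A₀ x^n and A₁ x^n, the point (x, y) lies in the closure of the graph of f in ℝ². -/

import Mathlib

/-!
Since `Δ_h^[n] f ≡ n! f h`, all `(n+1)`-st differences of `f` vanish, so by the Gregory–Newton
formula `f` restricted to any rational line `u + ℚ v` is a polynomial of degree `≤ n` in the
parameter; in particular `f (q h) = q ^ n f h` for `q ∈ ℚ`. Graph points `(r h, r ^ n f h)` with
rational `r → x / h` therefore converge to `(x, f h / h ^ n * x ^ n)`. On the rational line joining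
two such points (one for `h₀`, one for `h₁`) `f` agrees with a polynomial `P` of the parameter;
by density of `ℚ` the curve `t ↦ (u + t v, P t)` lies in the closure of the graph, and by the
intermediate value theorem it reaches every height between the two endpoint values above a point
between the endpoints. Letting both endpoints tend to `x` puts `(x, y)` in the closure.
-/

noncomputable def fdiff (h : ℝ) (f : ℝ → ℝ) : ℝ → ℝ := fun x => f (x + h) - f x

def IsMonomial (n : ℕ) (f : ℝ → ℝ) : Prop :=
  ∀ x h : ℝ, (1 / (n.factorial : ℝ)) * ((fdiff h)^[n] f) x = f h

open Polynomial fwdDiff Set Filter Topology Metric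
open scoped Nat

theorem fwdDiff_iter_eq_zero_of_le {M G : Type*} [AddCommMonoid M] [AddCommGroup G] {n k : ℕ}
    {f : M → G} {w : M} (hw : (Δ_[w])^[n] f = 0) (hk : n ≤ k) : (Δ_[w])^[k] f = 0 := by
  obtain ⟨j, rfl⟩ := Nat.exists_eq_add_of_le hk
  rw [add_comm, Function.iterate_add_apply, hw]
  exact Function.iterate_fixed (fwdDiff_const w (0 : G)) j

theorem Polynomial.eq_of_eval_natCast_eq {R : Type*} [CommRing R] [IsDomain R] [CharZero R]
    {p q : R[X]} (h : ∀ m : ℕ, p.eval (m : R) = q.eval (m : R)) : p = q :=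
  eq_of_infinite_eval_eq p q <| (Set.infinite_range_of_injective Nat.cast_injective).mono <| by
    rintro _ ⟨m, rfl⟩
    exact h m

theorem Polynomial.fwdDiff_iter_eval_eq_factorial_mul_coeff {R : Type*} [CommRing R] {P : R[X]}
    {n : ℕ} (hP : P.natDegree ≤ n) (x : R) : (Δ_[1])^[n] P.eval x = n ! * P.coeff n := by
  rcases hP.eq_or_lt with rfl | hlt
  · rw [fwdDiff_iter_degree_eq_factorial, Pi.smul_apply, smul_eq_mul, mul_comm]
    rfl
  · rw [fwdDiff_iter_eq_zero_of_degree_lt hlt, coeff_eq_zero_of_natDegree_lt hlt, mul_zero]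
    rfl

section PolynomialAlongLines

variable {K M : Type*} [Field K] [CharZero K] {n : ℕ}

theorem exists_polynomial_eval_natCast_eq [AddCommMonoid M] {f : M → K} {w : M}
    (hw : (Δ_[w])^[n + 1] f = 0) (b : M) :
    ∃ P : K[X], P.natDegree ≤ n ∧ ∀ m : ℕ, f (b + m • w) = P.eval (m : K) := by
  refine ⟨∑ k ∈ Finset.range (n + 1), C ((Δ_[w])^[k] f b / k !) * descPochhammer K k, ?_,
    fun m => ?_⟩
  · refine natDegree_sum_le_of_forall_le _ _ fun k hk => (natDegree_C_mul_le _ _).trans ?_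
    rw [descPochhammer_natDegree]
    exact Nat.lt_succ_iff.mp (Finset.mem_range.mp hk)
  calc f (b + m • w) = ∑ k ∈ Finset.range (m + 1), (m.choose k : K) * (Δ_[w])^[k] f b := by
        simp only [shift_eq_sum_fwdDiff_iter, nsmul_eq_mul]
    _ = ∑ k ∈ Finset.range (m + n + 1), (m.choose k : K) * (Δ_[w])^[k] f b :=
        Finset.sum_subset (Finset.range_subset_range.2 (by omega)) fun k _ hk => by
          rw [Nat.choose_eq_zero_of_lt (by simpa using hk), Nat.cast_zero, zero_mul]
    _ = ∑ k ∈ Finset.range (n + 1), (m.choose k : K) * (Δ_[w])^[k] f b := by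
        refine (Finset.sum_subset (Finset.range_subset_range.2 (by omega)) fun k _ hk => ?_).symm
        rw [fwdDiff_iter_eq_zero_of_le hw (by simpa using hk), Pi.zero_apply, mul_zero]
    _ = _ := by
        rw [eval_finsetSum]
        refine Finset.sum_congr rfl fun k _ => ?_
        rw [eval_mul, eval_C, descPochhammer_eval_eq_descFactorial,
          Nat.descFactorial_eq_factorial_mul_choose, Nat.cast_mul, mul_comm, ← mul_assoc,
          div_mul_cancel₀ _ (Nat.cast_ne_zero.2 k.factorial_ne_zero)]

theorem exists_polynomial_eval_intCast_eq [AddCommGroup M] {f : M → K} {w : M}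
    (hw : (Δ_[w])^[n + 1] f = 0) (b : M) :
    ∃ P : K[X], P.natDegree ≤ n ∧ ∀ m : ℤ, f (b + m • w) = P.eval (m : K) := by
  obtain ⟨P, hPdeg, hP⟩ := exists_polynomial_eval_natCast_eq hw b
  refine ⟨P, hPdeg, fun m => ?_⟩
  obtain ⟨k, rfl | rfl⟩ := Int.eq_nat_or_neg m
  · simpa using hP k
  obtain ⟨Q, -, hQ⟩ := exists_polynomial_eval_natCast_eq hw (b - k • w)
  have hQP : Q.comp (X + C (k : K)) = P := eq_of_eval_natCast_eq fun j => by
    rw [eval_comp, eval_add, eval_X, eval_C, ← hP, ← Nat.cast_add, ← hQ, add_nsmul,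
      sub_add_add_cancel]
  simpa [← hQP, ← sub_eq_add_neg] using hQ 0

/-- For `q = a / d`, the parameter `q` along `u + ℚ v` is the integer `a` along the progression of
step `v / d`, whose polynomial is that of step `v` rescaled by `d`. -/
theorem exists_polynomial_eval_ratCast_eq [AddCommGroup M] [Module ℚ M] {f : M → K}
    (hf : ∀ w, (Δ_[w])^[n + 1] f = 0) (u v : M) :
    ∃ P : K[X], P.natDegree ≤ n ∧ ∀ q : ℚ, f (u + q • v) = P.eval (q : K) := by
  obtain ⟨P, hPdeg, hP⟩ := exists_polynomial_eval_natCast_eq (hf v) u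
  refine ⟨P, hPdeg, fun q => ?_⟩
  obtain ⟨Q, -, hQ⟩ := exists_polynomial_eval_intCast_eq (hf ((q.den : ℚ)⁻¹ • v)) u
  have hden : (q.den : ℚ) ≠ 0 := Nat.cast_ne_zero.2 q.den_ne_zero
  have hQP : Q.comp (C (q.den : K) * X) = P := eq_of_eval_natCast_eq fun m => by
    rw [eval_comp, eval_mul, eval_C, eval_X, ← hP]
    have := hQ (q.den * m)
    push_cast at this
    rw [← this, ← Int.cast_smul_eq_zsmul ℚ, smul_smul]
    push_cast
    rw [mul_right_comm, mul_inv_cancel₀ hden, one_mul, Nat.cast_smul_eq_nsmul]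
  have hq : q • v = q.num • ((q.den : ℚ)⁻¹ • v) := by
    rw [← Int.cast_smul_eq_zsmul ℚ, smul_smul, ← div_eq_mul_inv, Rat.num_div_den]
  rw [hq, hQ, ← hQP, eval_comp, eval_mul, eval_C, eval_X, mul_comm]
  congr 1
  exact_mod_cast (Rat.mul_den_eq_num q).symm

end PolynomialAlongLines

theorem exists_mem_uIcc_mk_mem_closure_graph {n : ℕ} {f : ℝ → ℝ}
    (hf : ∀ w, (Δ_[w])^[n + 1] f = 0) {a b y : ℝ} (hy : y ∈ uIcc (f a) (f b)) :
    ∃ z ∈ uIcc a b, (z, y) ∈ closure {p : ℝ × ℝ | p.2 = f p.1} := by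
  obtain ⟨P, -, hP⟩ := exists_polynomial_eval_ratCast_eq hf a (b - a)
  have hP0 : P.eval 0 = f a := by simpa using (hP 0).symm
  have hP1 : P.eval 1 = f b := by simpa using (hP 1).symm
  rw [← hP0, ← hP1] at hy
  obtain ⟨t, ht, rfl⟩ := intermediate_value_uIcc P.continuous.continuousOn hy
  refine ⟨a + t * (b - a), ?_, ?_⟩
  · rw [uIcc_of_le zero_le_one] at ht
    exact (convex_uIcc a b).add_smul_sub_mem left_mem_uIcc right_mem_uIcc ht
  · refine map_mem_closure (f := fun s => (a + s * (b - a), P.eval s)) (by fun_prop)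
      (Rat.denseRange_cast t) ?_
    rintro _ ⟨q, rfl⟩
    simpa [Rat.smul_def] using (hP q).symm

theorem IsClosed.mk_mem_of_tendsto_of_mem_uIoo {ι : Type*} {l : Filter ι} [l.NeBot]
    {S : Set (ℝ × ℝ)} (hS : IsClosed S) {a b c d : ι → ℝ} {x y₀ y₁ y : ℝ}
    (ha : Tendsto a l (𝓝 x)) (hb : Tendsto b l (𝓝 x)) (hc : Tendsto c l (𝓝 y₀))
    (hd : Tendsto d l (𝓝 y₁))
    (hS' : ∀ i, ∀ y ∈ uIcc (c i) (d i), ∃ z ∈ uIcc (a i) (b i), (z, y) ∈ S)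
    (hy : y ∈ uIoo y₀ y₁) : (x, y) ∈ S := by
  rw [← hS.closure_eq, Metric.mem_closure_iff]
  intro ε hε
  have hlo : ∀ᶠ i in l, min (c i) (d i) < y := (hc.min hd).eventually (gt_mem_nhds hy.1)
  have hhi : ∀ᶠ i in l, y < max (c i) (d i) := (hc.max hd).eventually (lt_mem_nhds hy.2)
  obtain ⟨i, hlo, hhi, hai, hbi⟩ := (hlo.and (hhi.and ((ha.eventually_mem (ball_mem_nhds x hε)).and
    (hb.eventually_mem (ball_mem_nhds x hε))))).exists
  obtain ⟨z, hz, hzS⟩ := hS' i y ⟨hlo.le, hhi.le⟩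
  have hzx : z ∈ ball x ε := by
    rw [Real.ball_eq_Ioo] at hai hbi ⊢
    exact ordConnected_Ioo.uIcc_subset hai hbi hz
  refine ⟨(z, y), hzS, ?_⟩
  rw [Prod.dist_eq, dist_self, max_eq_left dist_nonneg, dist_comm]
  exact hzx

namespace IsMonomial

variable {n : ℕ} {f : ℝ → ℝ}

-- `fdiff h` is Mathlib's `fwdDiff h` by definition.
theorem fwdDiff_iter_eq (hf : IsMonomial n f) (h x : ℝ) : (Δ_[h])^[n] f x = n ! * f h := by
  rw [← hf x h, ← mul_assoc, mul_one_div_cancel (Nat.cast_ne_zero.2 n.factorial_ne_zero),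
    one_mul]
  rfl

theorem fwdDiff_iter_succ_eq_zero (hf : IsMonomial n f) (h : ℝ) : (Δ_[h])^[n + 1] f = 0 :=
  funext fun x => by
    rw [Function.iterate_succ_apply', fwdDiff, hf.fwdDiff_iter_eq, hf.fwdDiff_iter_eq, sub_self]
    rfl

/-- With `f (t h) = P t` on `ℚ`, `n! f (r h) = Δ_[r h]^[n] f 0` is the `n`-th difference with
step `1` of the polynomial `P (r X)`, that is `n!` times its coefficient `P.coeff n * r ^ n`. -/
theorem map_ratCast_mul (hf : IsMonomial n f) (q : ℚ) (h : ℝ) : f (q * h) = q ^ n * f h := by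
  obtain ⟨P, hPdeg, hP⟩ := exists_polynomial_eval_ratCast_eq hf.fwdDiff_iter_succ_eq_zero 0 h
  have key (r : ℚ) : f (r * h) = P.coeff n * r ^ n := by
    have hR : (P.comp (C (r : ℝ) * X)).natDegree ≤ n :=
      natDegree_comp_le.trans
        (by simpa using Nat.mul_le_mul hPdeg ((natDegree_C_mul_le _ _).trans natDegree_X_le))
    refine mul_left_cancel₀ (Nat.cast_ne_zero.2 n.factorial_ne_zero : (n ! : ℝ) ≠ 0) ?_
    calc (n ! : ℝ) * f (r * h) = (Δ_[(r : ℝ) * h])^[n] f 0 := (hf.fwdDiff_iter_eq _ 0).symm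
      _ = (Δ_[1])^[n] (P.comp (C (r : ℝ) * X)).eval 0 := by
        simp only [fwdDiff_iter_eq_sum_shift, zero_add, nsmul_eq_mul, mul_one, eval_comp,
          eval_mul, eval_C, eval_X]
        refine Finset.sum_congr rfl fun k _ => ?_
        have := hP (k * r)
        simp only [zero_add, Rat.smul_def, Rat.cast_mul, Rat.cast_natCast] at this
        rw [← mul_assoc, this, mul_comm (k : ℝ)]
      _ = n ! * (P.coeff n * r ^ n) := by
        rw [fwdDiff_iter_eval_eq_factorial_mul_coeff hR, comp_C_mul_X_coeff]
  have h1 := key 1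
  rw [Rat.cast_one, one_mul, one_pow, mul_one] at h1
  rw [key, h1, mul_comm]

theorem exists_seq_tendsto (hf : IsMonomial n f) {h : ℝ} (hh : h ≠ 0) (x : ℝ) :
    ∃ u : ℕ → ℝ, Tendsto u atTop (𝓝 x) ∧ Tendsto (f ∘ u) atTop (𝓝 (f h / h ^ n * x ^ n)) := by
  obtain ⟨r, -, -, hr⟩ := Real.exists_seq_rat_strictMono_tendsto (x / h)
  refine ⟨fun k => r k * h, by simpa [div_mul_cancel₀ _ hh] using hr.mul_const h, ?_⟩
  have hlim : f h / h ^ n * x ^ n = (x / h) ^ n * f h := by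
    rw [div_pow]
    field_simp
  simpa only [hlim, Function.comp_def, hf.map_ratCast_mul] using (hr.pow n).mul_const (f h)

end IsMonomial

theorem stmt7_general (n : ℕ) (f : ℝ → ℝ) (hf : IsMonomial n f)
    (h₀ h₁ : ℝ) (hh₀ : h₀ ≠ 0) (hh₁ : h₁ ≠ 0)
    (x y : ℝ)
    (hy : y ∈ Set.Icc (min (f h₀ / h₀ ^ n * x ^ n) (f h₁ / h₁ ^ n * x ^ n))
                      (max (f h₀ / h₀ ^ n * x ^ n) (f h₁ / h₁ ^ n * x ^ n))) :
    (x, y) ∈ closure {p : ℝ × ℝ | p.2 = f p.1} := by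
  set A₀ := f h₀ / h₀ ^ n * x ^ n
  set A₁ := f h₁ / h₁ ^ n * x ^ n
  obtain ⟨u₀, hu₀, hfu₀⟩ := hf.exists_seq_tendsto hh₀ x
  obtain ⟨u₁, hu₁, hfu₁⟩ := hf.exists_seq_tendsto hh₁ x
  have graph_lim {u : ℕ → ℝ} {y : ℝ} (hu : Tendsto u atTop (𝓝 x))
      (hfu : Tendsto (f ∘ u) atTop (𝓝 y)) : (x, y) ∈ closure {p : ℝ × ℝ | p.2 = f p.1} :=
    mem_closure_of_tendsto (hu.prodMk_nhds hfu) (Eventually.of_forall fun _ => rfl)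
  rcases eq_or_ne y A₀ with rfl | hy₀
  · exact graph_lim hu₀ hfu₀
  rcases eq_or_ne y A₁ with rfl | hy₁
  · exact graph_lim hu₁ hfu₁
  refine isClosed_closure.mk_mem_of_tendsto_of_mem_uIoo hu₀ hu₁ hfu₀ hfu₁
    (fun _ _ => exists_mem_uIcc_mk_mem_closure_graph hf.fwdDiff_iter_succ_eq_zero)
    ⟨hy.1.lt_of_ne ?_, hy.2.lt_of_ne ?_⟩
  · rcases min_choice A₀ A₁ with h | h <;> rw [h] <;> tauto
  · rcases max_choice A₀ A₁ with h | h <;> rw [h] <;> tauto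

theorem stmt7 (n : ℕ) (f : ℝ → ℝ) (hf : IsMonomial n f) (hdisc : ¬ Continuous f)
    (h₀ h₁ : ℝ) (hh₀ : h₀ ≠ 0) (hh₁ : h₁ ≠ 0)
    (hA : f h₀ / h₀ ^ n ≠ f h₁ / h₁ ^ n) (x y : ℝ)
    (hy : y ∈ Set.Icc (min (f h₀ / h₀ ^ n * x ^ n) (f h₁ / h₁ ^ n * x ^ n))
                      (max (f h₀ / h₀ ^ n * x ^ n) (f h₁ / h₁ ^ n * x ^ n))) :
    (x, y) ∈ closure {p : ℝ × ℝ | p.2 = f p.1} :=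
  stmt7_general n f hf h₀ h₁ hh₀ hh₁ x y hy
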